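/- arXiv:2411.18752 — 5 statements merged into one kernel-verified Lean document; each statement's English description precedes it below -/
import Mathlib

section
/- If f is L-smooth and satisfies the quasi strong convexity condition f⋆ ≥ f(x) + ⟨∇f(x), P(x) − x⟩ + (μ/2)‖P(x) − x‖² for all x (where P(x) is the projection onto the solution set X⋆ and f⋆ the minimal value), then f satisfies the error bound condition μ·dist(x, X⋆) ≤ ‖∇f(x)‖ for all x. -/
/-!
Quadratic growth `μ/2 · dist(x, X⋆)² ≤ f x − f⋆`, combined with quasi strong convexity at `x` and
Cauchy–Schwarz, gives `μ · dist(x, X⋆)² ≤ ‖∇f x‖ · dist(x, X⋆)`, which is the error bound.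

Quadratic growth comes from the relaxed projection step `x ↦ x + h (P x − x)`, `0 < h < 1`. It
shrinks the distance to `X⋆` exactly by the factor `1 − h`, and by the descent inequality and quasi
strong convexity it contracts the potential `(1 − h)(f − f⋆) − (μ/2 − L h) dist²` by the same
factor. Along the iterates the potential is bounded below by `−(μ/2 − L h) dist²`, which decays
like `(1 − h)^(2k)`, so the potential is nonnegative; letting `h → 0` gives quadratic growth.
Since the smoothness constant only enters through the `O(h²)` term, the mean value bound
`f y ≤ f x + ⟪∇f x, y − x⟫ + L‖y − x‖²` serves as well as the sharp one with `L/2`.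
-/

open scoped RealInnerProductSpace
open Filter Topology

section Descent

variable {E : Type*} [NormedAddCommGroup E] [InnerProductSpace ℝ E] [CompleteSpace E]

theorem le_add_inner_add_mul_norm_sq_of_hasGradientAt {f : E → ℝ} {g : E → E} {L : ℝ}
    (hgrad : ∀ x, HasGradientAt f (g x) x) (hlip : ∀ x y, ‖g x - g y‖ ≤ L * ‖x - y‖)
    (x y : E) : f y ≤ f x + ⟪g x, y - x⟫ + L * ‖y - x‖ ^ 2 := by
  have hL : 0 ≤ L * ‖y - x‖ := (norm_nonneg _).trans (hlip y x)
  have hmvt := (convex_closedBall x ‖y - x‖).norm_image_sub_le_of_norm_hasFDerivWithin_le'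
    (f' := fun z => InnerProductSpace.toDual ℝ E (g z))
    (φ := InnerProductSpace.toDual ℝ E (g x)) (y := y) (C := L * ‖y - x‖)
    (fun z _ => (hgrad z).hasFDerivAt.hasFDerivWithinAt)
    (fun z hz => by
      rw [← map_sub, LinearIsometryEquiv.norm_map]
      rw [Metric.mem_closedBall, dist_eq_norm] at hz
      have hz_lip := hlip z x
      rcases le_or_gt 0 L with hL0 | hL0
      · nlinarith [mul_le_mul_of_nonneg_left hz hL0]
      · nlinarith [norm_nonneg (z - x)])
    (Metric.mem_closedBall_self (norm_nonneg _)) (by simp [dist_eq_norm])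
  rw [InnerProductSpace.toDual_apply_apply] at hmvt
  linarith [(le_abs_self _).trans hmvt]

end Descent

def projStep {E : Type*} [AddCommGroup E] [Module ℝ E] (P : E → E) (h : ℝ) (x : E) : E :=
  x + h • (P x - x)

section NearestPoint

variable {E : Type*} [NormedAddCommGroup E] [NormedSpace ℝ E] {P : E → E} {h : ℝ}

theorem norm_sub_projStep (x : E) : ‖x - projStep P h x‖ = |h| * ‖x - P x‖ := by
  rw [projStep, sub_add_cancel_left, ← smul_neg, neg_sub, norm_smul, Real.norm_eq_abs]

theorem norm_projStep_sub (x : E) : ‖projStep P h x - P x‖ = |1 - h| * ‖x - P x‖ := by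
  rw [← Real.norm_eq_abs, ← norm_smul]
  congr 1
  simp only [projStep]
  module

theorem norm_projStep_sub_nearest (hP : ∀ x y, ‖x - P x‖ ≤ ‖x - P y‖) (h0 : 0 ≤ h) (h1 : h ≤ 1)
    (x : E) : ‖projStep P h x - P (projStep P h x)‖ = (1 - h) * ‖x - P x‖ := by
  set y := projStep P h x
  apply le_antisymm
  · calc ‖y - P y‖ ≤ ‖y - P x‖ := hP y x
      _ = (1 - h) * ‖x - P x‖ := by rw [norm_projStep_sub, abs_of_nonneg (by linarith)]
  · have hxy : ‖x - y‖ = h * ‖x - P x‖ := by rw [norm_sub_projStep, abs_of_nonneg h0]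
    linarith [hP x y, norm_sub_le_norm_sub_add_norm_sub x y (P y)]

theorem norm_iterate_projStep_sub_nearest (hP : ∀ x y, ‖x - P x‖ ≤ ‖x - P y‖) (h0 : 0 ≤ h)
    (h1 : h ≤ 1) (x : E) (k : ℕ) :
    ‖(projStep P h)^[k] x - P ((projStep P h)^[k] x)‖ = (1 - h) ^ k * ‖x - P x‖ := by
  induction k with
  | zero => simp
  | succ k ih =>
    rw [Function.iterate_succ_apply', norm_projStep_sub_nearest hP h0 h1, ih, pow_succ']
    ring

end NearestPoint

section QuadraticGrowth

variable {E : Type*} [NormedAddCommGroup E] [InnerProductSpace ℝ E]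
  {f : E → ℝ} {g P : E → E} {fstar μ K h : ℝ}

theorem qsc_potential_projStep_le (hdesc : ∀ x y, f y ≤ f x + ⟪g x, y - x⟫ + K * ‖y - x‖ ^ 2)
    (hP : ∀ x y, ‖x - P x‖ ≤ ‖x - P y‖)
    (hqsc : ∀ x, fstar ≥ f x + ⟪g x, P x - x⟫ + μ / 2 * ‖P x - x‖ ^ 2)
    (h0 : 0 ≤ h) (h1 : h ≤ 1) (x : E) :
    (1 - h) * (f (projStep P h x) - fstar)
        - (μ / 2 - K * h) * ‖projStep P h x - P (projStep P h x)‖ ^ 2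
      ≤ (1 - h) * ((1 - h) * (f x - fstar) - (μ / 2 - K * h) * ‖x - P x‖ ^ 2) := by
  have hdesc_x := hdesc x (projStep P h x)
  have hqsc_x := hqsc x
  have hmove : projStep P h x - x = h • (P x - x) := add_sub_cancel_left _ _
  rw [hmove, inner_smul_right, norm_smul, Real.norm_eq_abs, abs_of_nonneg h0, norm_sub_rev]
    at hdesc_x
  rw [norm_sub_rev] at hqsc_x
  rw [norm_projStep_sub_nearest hP h0 h1]
  have hdecrease : f (projStep P h x) - fstar
      ≤ (1 - h) * (f x - fstar) - h * (μ / 2 - K * h) * ‖x - P x‖ ^ 2 := by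
    nlinarith [mul_le_mul_of_nonneg_left hqsc_x h0]
  nlinarith [mul_le_mul_of_nonneg_left hdecrease (sub_nonneg.2 h1)]

theorem qsc_potential_nonneg (hdesc : ∀ x y, f y ≤ f x + ⟪g x, y - x⟫ + K * ‖y - x‖ ^ 2)
    (hP : ∀ x y, ‖x - P x‖ ≤ ‖x - P y‖)
    (hqsc : ∀ x, fstar ≥ f x + ⟪g x, P x - x⟫ + μ / 2 * ‖P x - x‖ ^ 2)
    (hmin : ∀ x, fstar ≤ f x) (h0 : 0 < h) (h1 : h < 1) (x : E) :
    (μ / 2 - K * h) * ‖x - P x‖ ^ 2 ≤ (1 - h) * (f x - fstar) := by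
  set W : E → ℝ := fun z => (1 - h) * (f z - fstar) - (μ / 2 - K * h) * ‖z - P z‖ ^ 2
  have hiter (k : ℕ) : W ((projStep P h)^[k] x) ≤ (1 - h) ^ k * W x := by
    induction k with
    | zero => simp
    | succ k ih =>
      rw [Function.iterate_succ_apply', pow_succ', mul_assoc]
      exact (qsc_potential_projStep_le hdesc hP hqsc h0.le h1.le _).trans
        (mul_le_mul_of_nonneg_left ih (by linarith))
  have hlower (k : ℕ) : -(μ / 2 - K * h) * (1 - h) ^ k * ‖x - P x‖ ^ 2 ≤ W x := by
    have hpos : 0 < (1 - h) ^ k := pow_pos (by linarith) k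
    have hWk := hiter k
    simp only [W, norm_iterate_projStep_sub_nearest hP h0.le h1.le] at hWk
    have hψ := mul_nonneg (sub_nonneg.2 h1.le) (sub_nonneg.2 (hmin ((projStep P h)^[k] x)))
    refine le_of_mul_le_mul_left ?_ hpos
    linear_combination hWk + hψ
  have hlim :
      Tendsto (fun k : ℕ => -(μ / 2 - K * h) * (1 - h) ^ k * ‖x - P x‖ ^ 2) atTop (𝓝 0) := by
    simpa using ((tendsto_pow_atTop_nhds_zero_of_lt_one (by linarith) (by linarith)).const_mul
      (-(μ / 2 - K * h))).mul_const (‖x - P x‖ ^ 2)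
  simpa [W] using le_of_tendsto' hlim hlower

theorem quadratic_growth_of_qsc (hdesc : ∀ x y, f y ≤ f x + ⟪g x, y - x⟫ + K * ‖y - x‖ ^ 2)
    (hP : ∀ x y, ‖x - P x‖ ≤ ‖x - P y‖)
    (hqsc : ∀ x, fstar ≥ f x + ⟪g x, P x - x⟫ + μ / 2 * ‖P x - x‖ ^ 2)
    (hmin : ∀ x, fstar ≤ f x) (x : E) : μ / 2 * ‖x - P x‖ ^ 2 ≤ f x - fstar := by
  have hlim : Tendsto (fun h : ℝ => (μ / 2 - K * h) * ‖x - P x‖ ^ 2 - (1 - h) * (f x - fstar))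
      (𝓝[>] 0) (𝓝 (μ / 2 * ‖x - P x‖ ^ 2 - (f x - fstar))) := by
    refine tendsto_nhdsWithin_of_tendsto_nhds (Continuous.tendsto' ?_ 0 _ ?_)
    · fun_prop
    · simp
  have hsmall : ∀ᶠ h in 𝓝[>] (0 : ℝ),
      (μ / 2 - K * h) * ‖x - P x‖ ^ 2 - (1 - h) * (f x - fstar) ≤ 0 := by
    filter_upwards [Ioo_mem_nhdsGT one_pos] with h hh
    linarith [qsc_potential_nonneg hdesc hP hqsc hmin hh.1 hh.2 x]
  linarith [le_of_tendsto hlim hsmall]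

theorem mul_norm_sub_le_norm_of_qsc_of_quadratic_growth {x p v : E} {fx fstar μ : ℝ}
    (hqsc : fstar ≥ fx + ⟪v, p - x⟫ + μ / 2 * ‖p - x‖ ^ 2)
    (hgrowth : μ / 2 * ‖x - p‖ ^ 2 ≤ fx - fstar) : μ * ‖x - p‖ ≤ ‖v‖ := by
  rw [← neg_sub x p, inner_neg_right, norm_neg] at hqsc
  have hcs := real_inner_le_norm v (x - p)
  rcases (norm_nonneg (x - p)).eq_or_lt with hzero | hpos
  · simp [← hzero]
  · exact le_of_mul_le_mul_right (by nlinarith) hpos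

end QuadraticGrowth

theorem qsc_implies_error_bound_general (d : ℕ) (f : EuclideanSpace ℝ (Fin d) → ℝ)
    (g : EuclideanSpace ℝ (Fin d) → EuclideanSpace ℝ (Fin d)) (L μ : ℝ)
    (Xstar : Set (EuclideanSpace ℝ (Fin d)))
    (fstar : ℝ)
    (P : EuclideanSpace ℝ (Fin d) → EuclideanSpace ℝ (Fin d))
    (hgrad : ∀ x, HasGradientAt f (g x) x)
    (hlip : ∀ x y, ‖g x - g y‖ ≤ L * ‖x - y‖)
    (hXmin : ∀ x, x ∈ Xstar ↔ (f x = fstar ∧ ∀ y, f x ≤ f y))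
    (hPmem : ∀ x, P x ∈ Xstar)
    (hPnear : ∀ x, ∀ y ∈ Xstar, ‖x - P x‖ ≤ ‖x - y‖)
    (hQSC : ∀ x, fstar ≥ f x + ⟪g x, P x - x⟫ + μ / 2 * ‖P x - x‖ ^ 2) :
    ∀ x, μ * ‖x - P x‖ ≤ ‖g x‖ := by
  intro x
  have hmin (y : EuclideanSpace ℝ (Fin d)) : fstar ≤ f y := by
    obtain ⟨hval, hle⟩ := (hXmin (P y)).1 (hPmem y)
    exact hval ▸ hle y
  have hgrowth := quadratic_growth_of_qsc
    (le_add_inner_add_mul_norm_sq_of_hasGradientAt hgrad hlip)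
    (fun x y => hPnear x (P y) (hPmem y)) hQSC hmin x
  exact mul_norm_sub_le_norm_of_qsc_of_quadratic_growth (hQSC x) hgrowth

theorem qsc_implies_error_bound (d : ℕ) (f : EuclideanSpace ℝ (Fin d) → ℝ)
    (g : EuclideanSpace ℝ (Fin d) → EuclideanSpace ℝ (Fin d)) (L μ : ℝ)
    (Xstar : Set (EuclideanSpace ℝ (Fin d))) (hXne : Xstar.Nonempty)
    (fstar : ℝ)
    (P : EuclideanSpace ℝ (Fin d) → EuclideanSpace ℝ (Fin d))
    (hgrad : ∀ x, HasGradientAt f (g x) x)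
    (hlip : ∀ x y, ‖g x - g y‖ ≤ L * ‖x - y‖)
    (hXmin : ∀ x, x ∈ Xstar ↔ (f x = fstar ∧ ∀ y, f x ≤ f y))
    (hPmem : ∀ x, P x ∈ Xstar)
    (hPnear : ∀ x, ∀ y ∈ Xstar, ‖x - P x‖ ≤ ‖x - y‖)
    (hQSC : ∀ x, fstar ≥ f x + ⟪g x, P x - x⟫ + μ / 2 * ‖P x - x‖ ^ 2) :
    ∀ x, μ * ‖x - P x‖ ≤ ‖g x‖ :=
  qsc_implies_error_bound_general d f g L μ Xstar fstar P hgrad hlip hXmin hPmem hPnear hQSC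
end

section
/- If f satisfies the Polyak–Łojasiewicz inequality c·(f(x) − f⋆) ≤ (1/2)‖∇f(x)‖² for all x, then f satisfies the quadratic growth condition (c/4)·dist²(x, X⋆) ≤ f(x) − f⋆ for all x (i.e., QG holds with constant c_QG = c/2). -/
/-!
Let `F = √(f - f⋆)` and `δ = √c / 2`. Ekeland's variational principle moves any `x` to a point `y`
with `δ ‖x - y‖ ≤ F x - F y` at which `F + δ ‖· - y‖` is minimised, so that `‖F' y‖ ≤ δ` if `F` is
differentiable there. Where `F > 0` the PL inequality gives `‖∇F‖ = ‖∇f‖ / (2F) ≥ √(c / 2) > δ`,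
so `F y = 0`, i.e. `y ∈ X⋆`, and squaring `δ · dist(x, X⋆) ≤ F x` is the claim.
-/

open Filter Topology Set Metric

section Ekeland

variable {X : Type*} [MetricSpace X] {h : X → ℝ} {δ : ℝ}

def ekelandSet (h : X → ℝ) (δ : ℝ) (w : X) : Set X := {z | h z + δ * dist z w ≤ h w}

theorem mem_ekelandSet {w z : X} : z ∈ ekelandSet h δ w ↔ h z + δ * dist z w ≤ h w :=
  Iff.rfl

theorem self_mem_ekelandSet {w : X} : w ∈ ekelandSet h δ w := by
  simp [mem_ekelandSet]

theorem ekelandSet_subset_of_mem (hδ : 0 ≤ δ) {w z : X} (hz : z ∈ ekelandSet h δ w) :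
    ekelandSet h δ z ⊆ ekelandSet h δ w := fun u hu => by
  have := mul_le_mul_of_nonneg_left (dist_triangle u z w) hδ
  rw [mem_ekelandSet] at hz hu ⊢
  linarith

theorem isClosed_ekelandSet (hh : LowerSemicontinuous h) (w : X) :
    IsClosed (ekelandSet h δ w) :=
  (hh.add (continuous_const.mul (continuous_id.dist continuous_const)).lowerSemicontinuous)
    |>.isClosed_preimage (h w)

theorem exists_mem_forall_le_add {α : Type*} {f : α → ℝ} {s : Set α} (hs : s.Nonempty)
    (hf : BddBelow (f '' s)) {ε : ℝ} (hε : 0 < ε) :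
    ∃ a ∈ s, ∀ b ∈ s, f a ≤ f b + ε := by
  obtain ⟨_, ⟨a, ha, rfl⟩, hlt⟩ :=
    exists_lt_of_csInf_lt (hs.image f) (lt_add_of_pos_right _ hε)
  exact ⟨a, ha, fun b hb => hlt.le.trans (add_le_add_left (csInf_le hf ⟨b, hb, rfl⟩) _)⟩

theorem mul_dist_le_of_forall_le_add (hδ : 0 ≤ δ) {w w' z : X} {ε : ℝ}
    (hw' : w' ∈ ekelandSet h δ w) (hmin : ∀ z ∈ ekelandSet h δ w, h w' ≤ h z + ε)
    (hz : z ∈ ekelandSet h δ w') : δ * dist z w' ≤ ε := by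
  have := hmin z (ekelandSet_subset_of_mem hδ hw' hz)
  rw [mem_ekelandSet] at hz
  linarith

theorem exists_forall_ne_lt_add_mul_dist [CompleteSpace X] (hh : LowerSemicontinuous h)
    (hbdd : BddBelow (range h)) (hδ : 0 < δ) (x : X) :
    ∃ y, h y + δ * dist y x ≤ h x ∧ ∀ z ≠ y, h y < h z + δ * dist z y := by
  -- `u (n + 1)` minimises `h` on `ekelandSet h δ (u n)` up to `2⁻ⁿ`; these nested closed sets
  -- shrink to a single point `y`, which is the limit of `u`.
  choose next hnext_mem hnext_min using fun (n : ℕ) (w : X) =>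
    exists_mem_forall_le_add ⟨w, self_mem_ekelandSet⟩ (hbdd.mono (image_subset_range h _))
      (pow_pos one_half_pos n)
  let u : ℕ → X := fun n => Nat.rec x (fun n w => next n w) n
  have hanti : Antitone fun n => ekelandSet h δ (u n) :=
    antitone_nat_of_succ_le fun n => ekelandSet_subset_of_mem hδ.le (hnext_mem n (u n))
  have hmem : ∀ n m, n ≤ m → u m ∈ ekelandSet h δ (u n) := fun n m hnm =>
    hanti hnm self_mem_ekelandSet
  have hsmall :
      ∀ n, ∀ z ∈ ekelandSet h δ (u (n + 1)), dist z (u (n + 1)) ≤ (1 / 2) ^ n / δ :=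
    fun n z hz => (le_div_iff₀' hδ).2 <|
      mul_dist_le_of_forall_le_add hδ.le (hnext_mem n (u n)) (hnext_min n (u n)) hz
  have hr : Tendsto (fun n => (1 / 2 : ℝ) ^ n / δ) atTop (𝓝 0) := by
    simpa using (tendsto_pow_atTop_nhds_zero_of_lt_one (r := (1 / 2 : ℝ)) (by norm_num)
      (by norm_num)).div_const δ
  have hcauchy : CauchySeq u := Metric.cauchySeq_iff'.2 fun ε hε => by
    obtain ⟨n, hn⟩ := (hr.eventually (gt_mem_nhds hε)).exists
    exact ⟨n + 1, fun m hm => (hsmall n _ (hmem _ _ hm)).trans_lt hn⟩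
  obtain ⟨y, hy⟩ := cauchySeq_tendsto_of_complete hcauchy
  have hyS : ∀ n, y ∈ ekelandSet h δ (u n) := fun n =>
    (isClosed_ekelandSet hh _).mem_of_tendsto hy ((eventually_ge_atTop n).mono (hmem n))
  refine ⟨y, hyS 0, fun z hzy => lt_of_not_ge fun hz => hzy ?_⟩
  have hzS : ∀ n, z ∈ ekelandSet h δ (u n) := fun n =>
    ekelandSet_subset_of_mem hδ.le (hyS n) hz
  have hz_lim : Tendsto (fun n => u (n + 1)) atTop (𝓝 z) :=
    tendsto_iff_dist_tendsto_zero.2 <| squeeze_zero (fun _ => dist_nonneg)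
      (fun n => dist_comm z (u (n + 1)) ▸ hsmall n z (hzS (n + 1))) hr
  exact tendsto_nhds_unique hz_lim (hy.comp (tendsto_add_atTop_nat 1))

end Ekeland

section Slope

variable {E : Type*} [NormedAddCommGroup E] [NormedSpace ℝ E] {δ : ℝ}

theorem HasFDerivAt.neg_mul_norm_le_apply_of_forall_le_add_mul_dist {h : E → ℝ}
    {h' : E →L[ℝ] ℝ} {y : E} (hh : HasFDerivAt h h' y)
    (hmin : ∀ z, h y ≤ h z + δ * dist z y) (v : E) : -(δ * ‖v‖) ≤ h' v := by
  let φ : ℝ → ℝ := fun t => h (y + t • v) + t * (δ * ‖v‖)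
  have hline : HasDerivAt (fun t : ℝ => y + t • v) v 0 := by
    simpa using ((hasDerivAt_id (0 : ℝ)).smul_const v).const_add y
  have hφ : HasDerivAt φ (h' v + δ * ‖v‖) 0 :=
    (hh.comp_hasDerivAt_of_eq 0 hline (by simp)).add (hasDerivAt_mul_const _)
  have hlocmin : IsLocalMinOn φ (Ici 0) 0 := by
    refine Filter.eventually_of_mem self_mem_nhdsWithin fun t (ht : 0 ≤ t) => ?_
    have := hmin (y + t • v)
    simp only [dist_eq_norm, add_sub_cancel_left, norm_smul, Real.norm_eq_abs,
      abs_of_nonneg ht] at this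
    simp only [φ, zero_smul, add_zero, zero_mul]
    linarith
  have := hlocmin.hasFDerivWithinAt_nonneg hφ.hasFDerivAt.hasFDerivWithinAt
    (mem_posTangentConeAt_of_segment_subset (y := (1 : ℝ))
      (by simp [segment_eq_Icc, Icc_subset_Ici_self]))
  simp only [ContinuousLinearMap.toSpanSingleton_apply, smul_eq_mul, one_mul] at this
  linarith

theorem HasFDerivAt.norm_le_of_forall_le_add_mul_dist {h : E → ℝ} {h' : E →L[ℝ] ℝ} {y : E}
    (hh : HasFDerivAt h h' y) (hδ : 0 ≤ δ) (hmin : ∀ z, h y ≤ h z + δ * dist z y) :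
    ‖h'‖ ≤ δ := by
  refine ContinuousLinearMap.opNorm_le_bound _ hδ fun v => abs_le.2 ⟨?_, ?_⟩
  · exact hh.neg_mul_norm_le_apply_of_forall_le_add_mul_dist hmin v
  · have := hh.neg_mul_norm_le_apply_of_forall_le_add_mul_dist hmin (-v)
    rw [map_neg, norm_neg] at this
    linarith

theorem exists_eq_zero_mul_dist_le_of_lt_norm_fderiv [CompleteSpace E] {F : E → ℝ}
    (hF : LowerSemicontinuous F) (hF0 : ∀ x, 0 ≤ F x) (hδ : 0 < δ)
    (hslope : ∀ y, 0 < F y → ∃ F' : E →L[ℝ] ℝ, HasFDerivAt F F' y ∧ δ < ‖F'‖)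
    (x : E) :
    ∃ y, F y = 0 ∧ δ * dist x y ≤ F x := by
  obtain ⟨y, hyx, hmin⟩ :=
    exists_forall_ne_lt_add_mul_dist hF ⟨0, by rintro _ ⟨z, rfl⟩; exact hF0 z⟩ hδ x
  refine ⟨y, ?_, by rw [dist_comm]; linarith [hF0 y]⟩
  by_contra hne
  obtain ⟨F', hF', hlt⟩ := hslope y ((hF0 y).lt_of_ne' hne)
  refine hlt.not_ge (hF'.norm_le_of_forall_le_add_mul_dist hδ.le fun z => ?_)
  rcases eq_or_ne z y with rfl | hzy
  · simp
  · exact (hmin z hzy).le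

theorem half_sqrt_lt_norm_fderiv_sqrt_sub {f : E → ℝ} {f' : E →L[ℝ] ℝ} {y : E} {m c : ℝ}
    (hf : HasFDerivAt f f' y) (hc : 0 < c) (hy : m < f y)
    (hPL : c * (f y - m) ≤ 1 / 2 * ‖f'‖ ^ 2) :
    ∃ F' : E →L[ℝ] ℝ, HasFDerivAt (fun z => √(f z - m)) F' y ∧ √c / 2 < ‖F'‖ := by
  have ha : 0 < f y - m := sub_pos.2 hy
  refine ⟨_, (hf.sub_const m).sqrt ha.ne', ?_⟩
  have hsa : 0 < √(f y - m) := Real.sqrt_pos.2 ha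
  rw [norm_smul, Real.norm_eq_abs, abs_of_pos (by positivity), one_div, inv_mul_eq_div,
    lt_div_iff₀ (by positivity)]
  calc √c / 2 * (2 * √(f y - m)) = √(c * (f y - m)) := by rw [Real.sqrt_mul hc.le]; ring
    _ < √(‖f'‖ ^ 2) := Real.sqrt_lt_sqrt (by positivity) (by nlinarith [mul_pos hc ha])
    _ = ‖f'‖ := Real.sqrt_sq (norm_nonneg _)

end Slope

theorem pl_implies_quadratic_growth_general (d : ℕ) (f : EuclideanSpace ℝ (Fin d) → ℝ)
    (g : EuclideanSpace ℝ (Fin d) → EuclideanSpace ℝ (Fin d)) (c fstar : ℝ)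
    (Xstar : Set (EuclideanSpace ℝ (Fin d)))
    (hc : 0 < c)
    (hgrad : ∀ x, HasGradientAt f (g x) x)
    (hXmin : ∀ x, x ∈ Xstar ↔ f x = fstar)
    (hlb : ∀ x, fstar ≤ f x)
    (hPL : ∀ x, c * (f x - fstar) ≤ (1 / 2) * ‖g x‖ ^ 2) :
    ∀ x, (c / 4) * (Metric.infDist x Xstar) ^ 2 ≤ f x - fstar := by
  intro x
  have hcont : Continuous f := Differentiable.continuous fun x => (hgrad x).differentiableAt
  obtain ⟨y, hy0, hxy⟩ := exists_eq_zero_mul_dist_le_of_lt_norm_fderiv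
    (hcont.sub continuous_const).sqrt.lowerSemicontinuous (fun _ => Real.sqrt_nonneg _)
    (by positivity : 0 < √c / 2) (fun y hy => half_sqrt_lt_norm_fderiv_sqrt_sub
      (hgrad y).hasFDerivAt hc (sub_pos.1 (Real.sqrt_pos.1 hy)) (by simpa using hPL y)) x
  have hyX : y ∈ Xstar := (hXmin y).2 <|
    le_antisymm (by simpa [Real.sqrt_eq_zero', sub_nonpos] using hy0) (hlb y)
  have hdist := infDist_le_dist_of_mem (x := x) hyX
  calc c / 4 * infDist x Xstar ^ 2 = (√c / 2 * infDist x Xstar) ^ 2 := by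
        rw [mul_pow, div_pow, Real.sq_sqrt hc.le]; norm_num
    _ ≤ (√(f x - fstar)) ^ 2 := by
        gcongr
        · exact mul_nonneg (by positivity) infDist_nonneg
        · exact (mul_le_mul_of_nonneg_left hdist (by positivity)).trans hxy
    _ = f x - fstar := Real.sq_sqrt (sub_nonneg.2 (hlb x))

theorem pl_implies_quadratic_growth (d : ℕ) (f : EuclideanSpace ℝ (Fin d) → ℝ)
    (g : EuclideanSpace ℝ (Fin d) → EuclideanSpace ℝ (Fin d)) (c fstar : ℝ)
    (Xstar : Set (EuclideanSpace ℝ (Fin d)))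
    (hc : 0 < c)
    (hf : ContDiff ℝ 1 f)
    (hgrad : ∀ x, HasGradientAt f (g x) x)
    (hXne : Xstar.Nonempty) (hXclosed : IsClosed Xstar)
    (hXmin : ∀ x, x ∈ Xstar ↔ f x = fstar)
    (hlb : ∀ x, fstar ≤ f x)
    (hPL : ∀ x, c * (f x - fstar) ≤ (1 / 2) * ‖g x‖ ^ 2) :
    ∀ x, (c / 4) * (Metric.infDist x Xstar) ^ 2 ≤ f x - fstar :=
  pl_implies_quadratic_growth_general d f g c fstar Xstar hc hgrad hXmin hlb hPL
end

section
/- If f is L-smooth and satisfies the error bound condition c_EB·dist(x, X⋆) ≤ ‖∇f(x)‖ for all x, then f satisfies the Polyak–Łojasiewicz inequality with constant c_PL = c_EB²/L, i.e., (c_EB²/L)·(f(x) − f⋆) ≤ (1/2)‖∇f(x)‖² for all x. -/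
/-!
Project `x` to a nearest minimiser `p`. Since `∇f(p) = 0`, the descent lemma for an `L`-smooth
function gives `f x - f⋆ ≤ (L/2)·dist(x, X⋆)²`, and the squared error bound
`c_EB²·dist(x, X⋆)² ≤ ‖∇f(x)‖²` turns this into the Polyak–Łojasiewicz inequality.
-/

open Metric InnerProductSpace Set

section LipschitzGradient

variable {E : Type*} [NormedAddCommGroup E] [InnerProductSpace ℝ E] [CompleteSpace E]
  {f : E → ℝ}

theorem IsLocalMin.hasGradientAt_eq_zero {a f' : E} (h : IsLocalMin f a)
    (hf : HasGradientAt f f' a) : f' = 0 :=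
  (toDual ℝ E).map_eq_zero_iff.1 (h.hasFDerivAt_eq_zero hf.hasFDerivAt)

theorem HasGradientAt.hasDerivAt_comp_add_smul {x v f' : E} {t : ℝ}
    (hf : HasGradientAt f f' (x + t • v)) :
    HasDerivAt (fun s : ℝ => f (x + s • v)) ⟪f', v⟫_ℝ t := by
  have hline : HasDerivAt (fun s : ℝ => x + s • v) v t := by
    simpa using ((hasDerivAt_id t).smul_const v).const_add x
  have := hf.hasFDerivAt.comp_hasDerivAt t hline
  rwa [toDual_apply_apply] at this

theorem le_add_inner_add_mul_sq_of_lipschitz_gradient {g : E → E} {L : ℝ}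
    (hgrad : ∀ x, HasGradientAt f (g x) x) (hlip : ∀ x y, ‖g x - g y‖ ≤ L * ‖x - y‖)
    (x y : E) : f y ≤ f x + ⟪g x, y - x⟫_ℝ + L / 2 * ‖y - x‖ ^ 2 := by
  set v := y - x
  -- `t ↦ f (x + t • v)` is dominated on `[0, 1]` by the quadratic whose slope bounds its own.
  have hderiv (t : ℝ) : HasDerivAt (fun s : ℝ => f (x + s • v)) ⟪g (x + t • v), v⟫_ℝ t :=
    (hgrad _).hasDerivAt_comp_add_smul
  have hbound (t : ℝ) : HasDerivAt (fun s : ℝ => f x + s * ⟪g x, v⟫_ℝ + L / 2 * s ^ 2 * ‖v‖ ^ 2)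
      (⟪g x, v⟫_ℝ + L * t * ‖v‖ ^ 2) t := by
    have hlin := ((hasDerivAt_id' t).mul_const ⟪g x, v⟫_ℝ).const_add (f x)
    have hquad := ((hasDerivAt_pow 2 t).const_mul (L / 2)).mul_const (‖v‖ ^ 2)
    exact (hlin.fun_add hquad).congr_deriv (by ring)
  have key := image_le_of_deriv_right_le_deriv_boundary (a := 0) (b := 1)
    (fun t _ => (hderiv t).continuousAt.continuousWithinAt) (fun t _ => (hderiv t).hasDerivWithinAt)
    (by simp) (fun t _ => (hbound t).continuousAt.continuousWithinAt)
    (fun t _ => (hbound t).hasDerivWithinAt) ?_ (right_mem_Icc.2 zero_le_one)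
  · simpa [v] using key
  intro t ht
  have hdiff : ‖g (x + t • v) - g x‖ ≤ L * t * ‖v‖ := by
    simpa [norm_smul, abs_of_nonneg ht.1, mul_assoc] using hlip (x + t • v) x
  calc ⟪g (x + t • v), v⟫_ℝ = ⟪g x, v⟫_ℝ + ⟪g (x + t • v) - g x, v⟫_ℝ := by
        rw [inner_sub_left]; ring
    _ ≤ ⟪g x, v⟫_ℝ + ‖g (x + t • v) - g x‖ * ‖v‖ := by gcongr; exact real_inner_le_norm _ _
    _ ≤ ⟪g x, v⟫_ℝ + L * t * ‖v‖ * ‖v‖ := by gcongr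
    _ = ⟪g x, v⟫_ℝ + L * t * ‖v‖ ^ 2 := by ring

end LipschitzGradient

theorem eb_implies_pl (d : ℕ) (f : EuclideanSpace ℝ (Fin d) → ℝ)
    (g : EuclideanSpace ℝ (Fin d) → EuclideanSpace ℝ (Fin d)) (L cEB fstar : ℝ)
    (Xstar : Set (EuclideanSpace ℝ (Fin d)))
    (hcEB : 0 < cEB)
    (hgrad : ∀ x, HasGradientAt f (g x) x)
    (hlip : ∀ x y, ‖g x - g y‖ ≤ L * ‖x - y‖)
    (hXne : Xstar.Nonempty) (hXclosed : IsClosed Xstar)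
    (hXmin : ∀ x, x ∈ Xstar ↔ (f x = fstar ∧ ∀ y, f x ≤ f y))
    (hEB : ∀ x, cEB * Metric.infDist x Xstar ≤ ‖g x‖) :
    ∀ x, (cEB ^ 2 / L) * (f x - fstar) ≤ (1 / 2) * ‖g x‖ ^ 2 := by
  intro x
  obtain ⟨p, hpX, hdist⟩ := hXclosed.exists_infDist_eq_dist hXne x
  obtain ⟨rfl, hpmin⟩ := (hXmin p).1 hpX
  have hgp : g p = 0 :=
    IsLocalMin.hasGradientAt_eq_zero (Filter.Eventually.of_forall hpmin) (hgrad p)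
  have hfx : 0 ≤ f x - f p := sub_nonneg.2 (hpmin x)
  rcases le_or_gt L 0 with hL | hL
  · -- for `L ≤ 0` the coefficient `cEB ^ 2 / L` is nonpositive (it is `0` when `L = 0`)
    have : cEB ^ 2 / L ≤ 0 := div_nonpos_of_nonneg_of_nonpos (sq_nonneg _) hL
    exact (mul_nonpos_of_nonpos_of_nonneg this hfx).trans (by positivity)
  have hgrowth : f x - f p ≤ L / 2 * infDist x Xstar ^ 2 := by
    have := le_add_inner_add_mul_sq_of_lipschitz_gradient hgrad hlip p x
    rw [hgp, inner_zero_left, ← dist_eq_norm, ← hdist] at this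
    linarith
  have hEB_sq : (cEB * infDist x Xstar) ^ 2 ≤ ‖g x‖ ^ 2 :=
    pow_le_pow_left₀ (mul_nonneg hcEB.le infDist_nonneg) (hEB x) 2
  calc cEB ^ 2 / L * (f x - f p) ≤ cEB ^ 2 / L * (L / 2 * infDist x Xstar ^ 2) := by gcongr
    _ = 1 / 2 * (cEB * infDist x Xstar) ^ 2 := by field_simp
    _ ≤ 1 / 2 * ‖g x‖ ^ 2 := by gcongr
end

section
/- Suppose f is L-smooth, μ_WC-weakly convex (i.e., f(y) ≥ f(x) + ⟨∇f(x), y−x⟩ − (μ_WC/2)‖y−x‖² for all x,y), and satisfies the quadratic growth condition (c/2)·dist²(x,X⋆) ≤ f(x) − f⋆ with c > μ_WC. Then for every α ∈ (0, (c − μ_WC)/L), setting μ = (c − μ_WC − αL)/2 > 0, it holds for all x that α(f(x) − f⋆) + ⟨∇f(x), P(x) − x⟩ + (μ/2)‖P(x) − x‖² ≤ 0, where P(x) is a nearest point of X⋆ to x. -/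
/-!
Write `Δ = f x - f⋆` and `r = ‖P x - x‖`. Weak convexity between `x` and `P x` bounds
`⟪∇f x, P x - x⟫ ≤ -Δ + (μ_WC/2) r²`, and the descent lemma at the critical point `P x` gives
`Δ ≤ (L/2) r²`. Hence `α Δ + ⟪∇f x, P x - x⟫ ≤ (α - 1) Δ + (μ_WC/2) r²`, and splitting `(α - 1) Δ`
into `α Δ ≤ (αL/2) r²` and `-Δ ≤ -(c/2) r²` (quadratic growth) bounds the left side of the
claim by `-μ r² + (μ/2) r² = -(μ/2) r² ≤ 0`.
-/

open scoped RealInnerProductSpace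

section

variable {E : Type*} [NormedAddCommGroup E] [InnerProductSpace ℝ E]

theorem noncvx_condition_of_weaklyConvex_of_quadraticGrowth {f : E → ℝ} {g : E → E}
    {L μWC c α : ℝ} {x p : E}
    (hupper : f x ≤ f p + ⟪g p, x - p⟫ + L / 2 * ‖x - p‖ ^ 2)
    (hlower : f p ≥ f x + ⟪g x, p - x⟫ - μWC / 2 * ‖p - x‖ ^ 2)
    (hgp : g p = 0) (hQG : c / 2 * ‖x - p‖ ^ 2 ≤ f x - f p)
    (hα : 0 ≤ α) (hαL : α * L ≤ c - μWC) :
    α * (f x - f p) + ⟪g x, p - x⟫ + (c - μWC - α * L) / 2 / 2 * ‖p - x‖ ^ 2 ≤ 0 := by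
  rw [norm_sub_rev x p] at hupper hQG
  rw [hgp, inner_zero_left, add_zero] at hupper
  have hdescent : α * (f x - f p) ≤ α * (L / 2 * ‖p - x‖ ^ 2) :=
    mul_le_mul_of_nonneg_left (by linarith) hα
  calc α * (f x - f p) + ⟪g x, p - x⟫ + (c - μWC - α * L) / 2 / 2 * ‖p - x‖ ^ 2
      ≤ α * (L / 2 * ‖p - x‖ ^ 2) - c / 2 * ‖p - x‖ ^ 2 + μWC / 2 * ‖p - x‖ ^ 2
          + (c - μWC - α * L) / 2 / 2 * ‖p - x‖ ^ 2 := by linarith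
    _ = -((c - μWC - α * L) / 4 * ‖p - x‖ ^ 2) := by ring
    _ ≤ 0 := neg_nonpos.2 (mul_nonneg (by linarith) (sq_nonneg _))

end

theorem weakly_convex_qg_implies_noncvx_condition_general (d : ℕ)
    (f : EuclideanSpace ℝ (Fin d) → ℝ)
    (g : EuclideanSpace ℝ (Fin d) → EuclideanSpace ℝ (Fin d))
    (L μWC c fstar : ℝ)
    (Xstar : Set (EuclideanSpace ℝ (Fin d)))
    (P : EuclideanSpace ℝ (Fin d) → EuclideanSpace ℝ (Fin d))
    (hL : 0 < L)
    (hsmooth : ∀ x y, f y ≤ f x + ⟪g x, y - x⟫ + L / 2 * ‖y - x‖ ^ 2)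
    (hWC : ∀ x y, f y ≥ f x + ⟪g x, y - x⟫ - μWC / 2 * ‖y - x‖ ^ 2)
    (hXmin : ∀ x, x ∈ Xstar ↔ (f x = fstar ∧ ∀ y, f x ≤ f y))
    (hgradzero : ∀ x ∈ Xstar, g x = 0)
    (hPmem : ∀ x, P x ∈ Xstar)
    (hQG : ∀ x, (c / 2) * ‖x - P x‖ ^ 2 ≤ f x - fstar)
    (α : ℝ) (hα : α ∈ Set.Ioo (0 : ℝ) ((c - μWC) / L)) :
    0 < (c - μWC - α * L) / 2 ∧
      ∀ x, α * (f x - fstar) + ⟪g x, P x - x⟫ +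
        ((c - μWC - α * L) / 2) / 2 * ‖P x - x‖ ^ 2 ≤ 0 := by
  have hαL : α * L < c - μWC := (lt_div_iff₀ hL).1 hα.2
  refine ⟨by linarith, fun x => ?_⟩
  have hfP : f (P x) = fstar := ((hXmin (P x)).1 (hPmem x)).1
  subst hfP
  exact noncvx_condition_of_weaklyConvex_of_quadraticGrowth (hsmooth (P x) x) (hWC x (P x))
    (hgradzero (P x) (hPmem x)) (hQG x) hα.1.le hαL.le

theorem weakly_convex_qg_implies_noncvx_condition (d : ℕ)
    (f : EuclideanSpace ℝ (Fin d) → ℝ)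
    (g : EuclideanSpace ℝ (Fin d) → EuclideanSpace ℝ (Fin d))
    (L μWC c fstar : ℝ)
    (Xstar : Set (EuclideanSpace ℝ (Fin d)))
    (P : EuclideanSpace ℝ (Fin d) → EuclideanSpace ℝ (Fin d))
    (hL : 0 < L)
    (hgrad : ∀ x, HasGradientAt f (g x) x)
    (hsmooth : ∀ x y, f y ≤ f x + ⟪g x, y - x⟫ + L / 2 * ‖y - x‖ ^ 2)
    (hWC : ∀ x y, f y ≥ f x + ⟪g x, y - x⟫ - μWC / 2 * ‖y - x‖ ^ 2)
    (hXne : Xstar.Nonempty) (hXclosed : IsClosed Xstar)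
    (hXmin : ∀ x, x ∈ Xstar ↔ (f x = fstar ∧ ∀ y, f x ≤ f y))
    (hgradzero : ∀ x ∈ Xstar, g x = 0)
    (hPmem : ∀ x, P x ∈ Xstar)
    (hPnear : ∀ x, ∀ y ∈ Xstar, ‖x - P x‖ ≤ ‖x - y‖)
    (hQG : ∀ x, (c / 2) * ‖x - P x‖ ^ 2 ≤ f x - fstar)
    (hcμ : μWC < c)
    (α : ℝ) (hα : α ∈ Set.Ioo (0 : ℝ) ((c - μWC) / L)) :
    0 < (c - μWC - α * L) / 2 ∧
      ∀ x, α * (f x - fstar) + ⟪g x, P x - x⟫ +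
        ((c - μWC - α * L) / 2) / 2 * ‖P x - x‖ ^ 2 ≤ 0 :=
  weakly_convex_qg_implies_noncvx_condition_general d f g L μWC c fstar Xstar P hL hsmooth hWC hXmin
    hgradzero hPmem hQG α hα
end

section
/- In a complete binary tree with n = 2^k leaves where each internal node stores the sum of its children, every prefix sum of the first j leaves (1 ≤ j ≤ n) can be written as the sum of at most log₂(n) node values, and each leaf value contributes to at most log₂(n) + 1 node values. -/
/-!
Node `(b, q)` at height `b` stores the sum of the leaves `j` with `j / 2 ^ b = q`, so every leaf
enters one node per height. The prefix `[0, m)` is the union of the nodes `(b, m / 2 ^ b - 1)`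
over the set bits `b` of `m`: leaf `j` lies in the one at height `b` exactly when
`j / 2 ^ b < m / 2 ^ b` but `j / 2 ^ (b + 1) = m / 2 ^ (b + 1)`, so summing over `b` telescopes
to `[j < m]`. For `m ≤ 2 ^ k` with `k ≥ 1`, at most `k` of the bits `0, …, k` of `m` are set.
-/

open Finset

namespace BinaryTree

def IsPrefixBlock (m b q : ℕ) : Prop :=
  m.testBit b ∧ q + 1 = m / 2 ^ b

instance (m b q : ℕ) : Decidable (IsPrefixBlock m b q) :=
  inferInstanceAs (Decidable (_ ∧ _))

theorem isPrefixBlock_div_iff (m b j : ℕ) :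
    IsPrefixBlock m b (j / 2 ^ b) ↔
      j / 2 ^ b < m / 2 ^ b ∧ ¬j / 2 ^ (b + 1) < m / 2 ^ (b + 1) := by
  simp only [IsPrefixBlock, Nat.testBit_eq_decide_div_mod_eq, decide_eq_true_eq, pow_succ,
    ← Nat.div_div_eq_div_mul]
  omega

theorem boole_isPrefixBlock_div (m b j : ℕ) :
    (if IsPrefixBlock m b (j / 2 ^ b) then (1 : ℝ) else 0) =
      (if j / 2 ^ b < m / 2 ^ b then 1 else 0) -
        (if j / 2 ^ (b + 1) < m / 2 ^ (b + 1) then 1 else 0) := by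
  have hmono : j / 2 ^ (b + 1) < m / 2 ^ (b + 1) → j / 2 ^ b < m / 2 ^ b := by
    rw [pow_succ, ← Nat.div_div_eq_div_mul, ← Nat.div_div_eq_div_mul]
    omega
  simp only [isPrefixBlock_div_iff]
  split_ifs <;> simp_all

theorem sum_range_boole_isPrefixBlock_div {m K : ℕ} (hm : m < 2 ^ K) (j : ℕ) :
    ∑ b ∈ range K, (if IsPrefixBlock m b (j / 2 ^ b) then (1 : ℝ) else 0) =
      if j < m then 1 else 0 := by
  simp_rw [boole_isPrefixBlock_div]
  rw [sum_range_sub' (fun b ↦ if j / 2 ^ b < m / 2 ^ b then (1 : ℝ) else 0)]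
  simp [Nat.div_eq_of_lt hm]

theorem card_filter_testBit_le {k m : ℕ} (hk : 1 ≤ k) (hm : m ≤ 2 ^ k) :
    #{b : Fin (k + 1) | m.testBit b} ≤ k := by
  obtain ⟨b, hb⟩ : ∃ b : Fin (k + 1), m.testBit b = false := by
    by_cases h : m.testBit k
    · have : m = 2 ^ k := le_antisymm hm (Nat.ge_two_pow_of_testBit h)
      exact ⟨0, by simp [this]; omega⟩
    · exact ⟨Fin.last k, by simpa using h⟩
  have : #{b : Fin (k + 1) | m.testBit b} < #(univ : Finset (Fin (k + 1))) :=
    card_lt_card (filter_ssubset.mpr ⟨b, mem_univ _, by simp [hb]⟩)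
  simpa [Nat.lt_add_one_iff] using this

variable (k n : ℕ)

def aggregation : Matrix (Fin (k + 1) × Fin n) (Fin n) ℝ :=
  fun p j ↦ if (j : ℕ) / 2 ^ (p.1 : ℕ) = p.2 then 1 else 0

def reconstruction : Matrix (Fin n) (Fin (k + 1) × Fin n) ℝ :=
  fun i p ↦ if IsPrefixBlock (i + 1) p.1 p.2 then 1 else 0

variable {k n}

theorem reconstruction_mul_aggregation (hn : n < 2 ^ (k + 1)) (i j : Fin n) :
    (reconstruction k n * aggregation k n) i j = if (j : ℕ) ≤ i then 1 else 0 := by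
  have hm : (i : ℕ) + 1 < 2 ^ (k + 1) := by omega
  calc (reconstruction k n * aggregation k n) i j
      = ∑ b : Fin (k + 1), ∑ q : Fin n, if (j : ℕ) / 2 ^ (b : ℕ) = q then
          (if IsPrefixBlock (i + 1) b q then (1 : ℝ) else 0) else 0 := by
        simp only [Matrix.mul_apply, Fintype.sum_prod_type, reconstruction, aggregation, mul_boole]
    _ = ∑ b : Fin (k + 1), if IsPrefixBlock (i + 1) b (j / 2 ^ (b : ℕ)) then (1 : ℝ) else 0 := by
        refine sum_congr rfl fun b _ ↦ ?_
        rw [Fin.sum_univ_eq_sum_range (fun q ↦ if (j : ℕ) / 2 ^ (b : ℕ) = q then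
          (if IsPrefixBlock (i + 1) b q then (1 : ℝ) else 0) else 0), sum_ite_eq,
          if_pos (mem_range.mpr ((Nat.div_le_self _ _).trans_lt j.2))]
    _ = if (j : ℕ) ≤ i then 1 else 0 := by
        rw [Fin.sum_univ_eq_sum_range (fun b ↦ if IsPrefixBlock (i + 1) b (j / 2 ^ b) then
          (1 : ℝ) else 0), sum_range_boole_isPrefixBlock_div hm]
        simp only [Nat.lt_add_one_iff]

theorem sum_reconstruction_le (hk : 1 ≤ k) (hn : n ≤ 2 ^ k) (i : Fin n) :
    ∑ p, reconstruction k n i p ≤ k := by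
  have hcard : #{p : Fin (k + 1) × Fin n | IsPrefixBlock (i + 1) p.1 p.2} ≤ k := by
    refine (card_le_card_of_injOn Prod.fst (fun p hp ↦ ?_) fun p hp p' hp' h ↦ ?_).trans
      (card_filter_testBit_le hk (by omega : (i : ℕ) + 1 ≤ 2 ^ k))
    · exact mem_filter.mpr ⟨mem_univ _, (mem_filter.mp hp).2.1⟩
    · obtain ⟨-, hq⟩ := (mem_filter.mp hp).2
      obtain ⟨-, hq'⟩ := (mem_filter.mp hp').2
      rw [h] at hq
      exact Prod.ext h (Fin.ext (by omega))
  simpa [reconstruction, sum_boole] using hcard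

theorem sum_aggregation_le (j : Fin n) : ∑ p, aggregation k n p j ≤ k + 1 := by
  have hcard : #{p : Fin (k + 1) × Fin n | (j : ℕ) / 2 ^ (p.1 : ℕ) = p.2} ≤ k + 1 := by
    refine (card_le_card_of_injOn Prod.fst (fun p _ ↦ mem_univ p.1) fun p hp p' hp' h ↦ ?_).trans
      (card_univ.trans (Fintype.card_fin _)).le
    have hq := (mem_filter.mp hp).2
    have hq' := (mem_filter.mp hp').2
    rw [h] at hq
    exact Prod.ext h (Fin.ext (hq.symm.trans hq'))
  simp only [aggregation, sum_boole]
  exact_mod_cast hcard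

end BinaryTree

open BinaryTree in
theorem binary_tree_mechanism (k : ℕ) (hk : 1 ≤ k) (n : ℕ) (hn : n = 2 ^ k)
    (A : Matrix (Fin n) (Fin n) ℝ)
    (hA : ∀ i j : Fin n, A i j = if (j : ℕ) ≤ (i : ℕ) then 1 else 0) :
    ∃ (W : ℕ) (B : Matrix (Fin n) (Fin W) ℝ) (C : Matrix (Fin W) (Fin n) ℝ),
      (∀ i j, B i j = 0 ∨ B i j = 1) ∧
      (∀ i j, C i j = 0 ∨ C i j = 1) ∧
      B * C = A ∧
      (∀ i : Fin n, ∑ j, B i j ≤ (k : ℝ)) ∧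
      (∀ j : Fin n, ∑ i, C i j ≤ (k : ℝ) + 1) := by
  let e : Fin ((k + 1) * n) ≃ Fin (k + 1) × Fin n := finProdFinEquiv.symm
  refine ⟨(k + 1) * n, (reconstruction k n).submatrix id e, (aggregation k n).submatrix e id,
    fun i w ↦ (ite_eq_or_eq _ _ _).symm, fun w j ↦ (ite_eq_or_eq _ _ _).symm, ?_,
    fun i ↦ ?_, fun j ↦ ?_⟩
  · ext i j
    rw [Matrix.submatrix_mul_equiv, Matrix.submatrix_id_id, hA,
      reconstruction_mul_aggregation (hn ▸ Nat.pow_lt_pow_succ one_lt_two)]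
  · exact (e.sum_comp (reconstruction k n i)).trans_le (sum_reconstruction_le hk hn.le i)
  · exact (e.sum_comp (aggregation k n · j)).trans_le (sum_aggregation_le j)
end
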